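/- Let n ≥ 1, α_i ≥ 1, γ_i ≥ 1, β_i ≥ 2 for all i. If 2(e − 1)·∏_{i=1}^n [Γ(β_i)]^{γ_i} < ∏_{i=1}^n [Γ(α_i + β_i)]^{γ_i}, then the normalized multi-index Le Roy function 𝔽(z) = z + ∑_{k=1}^∞ A_{k+1} z^{k+1}, A_{k+1} = ∏_i[Γ(β_i)]^{γ_i}/∏_i[Γ(α_i k + β_i)]^{γ_i}, satisfies |𝔽'(z) − 1| < 1 for all |z| < 1, and hence 𝔽 is convex in {z : |z| < 1/2}. -/

import Mathlib

/-!
Write 𝔽(z) = z + ∑ c_k z^{k+2}. Then 𝔽' − 1 = ∑ (k+2) c_k z^{k+1}, and for |z| ≤ 1/2 the inequality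
k + 2 ≤ 2^{k+1} gives |𝔽' − 1| + |z 𝔽''| ≤ ∑ (k+2)² |c_k| |z|^{k+1} ≤ ∑ (k+2) |c_k|. So as soon as
∑ (k+2) |c_k| < 1, both |𝔽' − 1| < 1 on the unit disc and |z 𝔽''| < 1 − |𝔽' − 1| ≤ |𝔽'| on the
disc of radius 1/2, whence Re (1 + z 𝔽''/𝔽') > 0 there.

For the Le Roy coefficients c_k = P / Q(k+1), with Q(m) = ∏ Γ(α_i m + β_i)^{γ_i}, the functional
equation of Γ and its monotonicity on [2, ∞) give Q(m+1) ≥ (m+2) Q(m), hence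
(k+2) c_k ≤ 2 c_0 / (k+1)!, and ∑ 1/(k+1)! = e − 1.
-/

open scoped Nat

theorem hasDerivAt_tsum_mul_pow {a : ℕ → ℂ} {r : ℝ} (p : ℕ)
    (ha : Summable fun m => ‖a m‖ * (m + p + 1 : ℕ) * r ^ (m + p)) {z : ℂ} (hz : ‖z‖ < r) :
    HasDerivAt (fun w => ∑' m, a m * w ^ (m + p + 1))
      (∑' m, a m * (m + p + 1 : ℕ) * z ^ (m + p)) z := by
  refine hasDerivAt_tsum_of_isPreconnected (g := fun m w => a m * w ^ (m + p + 1))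
    (g' := fun m w => a m * (m + p + 1 : ℕ) * w ^ (m + p)) ha Metric.isOpen_ball
    (convex_ball 0 r).isPreconnected (fun m y _ => ?_) (fun m y hy => ?_)
    (Metric.mem_ball_self ((norm_nonneg z).trans_lt hz)) ?_ (mem_ball_zero_iff.mpr hz)
  · simpa [mul_assoc] using (hasDerivAt_pow (m + p + 1) y).const_mul (a m)
  · rw [norm_mul, norm_mul, norm_pow, Complex.norm_natCast]
    gcongr
    exact (mem_ball_zero_iff.mp hy).le
  · simp

theorem natCast_succ_mul_half_pow_le_one (m : ℕ) : ((m + 1 : ℕ) : ℝ) * (1 / 2) ^ m ≤ 1 := by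
  rw [one_div_pow, mul_one_div, div_le_one (by positivity)]
  exact_mod_cast Nat.lt_two_pow_self

theorem Complex.re_one_add_div_pos {u v : ℂ} (h : ‖u‖ + ‖v‖ < 1) : 0 < (1 + v / (1 + u)).re := by
  have hvu : ‖v‖ < ‖1 + u‖ := by
    have := norm_sub_le (1 + u) u
    rw [add_sub_cancel_right, norm_one] at this
    linarith
  have hdiv : ‖v / (1 + u)‖ < 1 := by
    rw [norm_div, div_lt_one ((norm_nonneg v).trans_lt hvu)]
    exact hvu
  rw [Complex.add_re, Complex.one_re]
  linarith [neg_abs_le (v / (1 + u)).re, Complex.abs_re_le_norm (v / (1 + u))]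

noncomputable def normalizedPowerSeries (c : ℕ → ℂ) (w : ℂ) : ℂ := w + ∑' k, c k * w ^ (k + 2)

namespace normalizedPowerSeries

variable {c : ℕ → ℂ} {z : ℂ}

theorem hasDerivAt (hc : Summable fun m => ‖c m‖ * (m + 2 : ℕ)) (hz : ‖z‖ < 1) :
    HasDerivAt (normalizedPowerSeries c) (1 + ∑' m, c m * (m + 2 : ℕ) * z ^ (m + 1)) z :=
  (hasDerivAt_id z).add (hasDerivAt_tsum_mul_pow 1 (by simpa only [one_pow, mul_one] using hc) hz)

theorem deriv_eq (hc : Summable fun m => ‖c m‖ * (m + 2 : ℕ)) (hz : ‖z‖ < 1) :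
    deriv (normalizedPowerSeries c) z = 1 + ∑' m, c m * (m + 2 : ℕ) * z ^ (m + 1) :=
  (hasDerivAt hc hz).deriv

theorem deriv_deriv_eq (hc : Summable fun m => ‖c m‖ * (m + 2 : ℕ)) (hz : ‖z‖ < 1 / 2) :
    deriv (deriv (normalizedPowerSeries c)) z =
      ∑' m, c m * (m + 2 : ℕ) * (m + 1 : ℕ) * z ^ m := by
  have hz1 : ‖z‖ < 1 := hz.trans (by norm_num)
  have hsum : Summable fun m => ‖c m * (m + 2 : ℕ)‖ * (m + 1 : ℕ) * (1 / 2 : ℝ) ^ m := by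
    refine hc.of_nonneg_of_le (fun m => by positivity) fun m => ?_
    rw [norm_mul, Complex.norm_natCast, mul_assoc]
    exact mul_le_of_le_one_right (by positivity) (natCast_succ_mul_half_pow_le_one m)
  have hderiv : deriv (normalizedPowerSeries c) =ᶠ[nhds z]
      fun w => 1 + ∑' m, c m * (m + 2 : ℕ) * w ^ (m + 1) := by
    filter_upwards [Metric.isOpen_ball.mem_nhds (mem_ball_zero_iff.mpr hz1)] with w hw
    exact deriv_eq hc (mem_ball_zero_iff.mp hw)
  rw [hderiv.deriv_eq]
  exact ((hasDerivAt_tsum_mul_pow 0 hsum hz).const_add 1).deriv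

theorem norm_deriv_sub_one_le (hc : Summable fun m => ‖c m‖ * (m + 2 : ℕ)) (hz : ‖z‖ < 1) :
    ‖deriv (normalizedPowerSeries c) z - 1‖ ≤ ∑' m, ‖c m‖ * (m + 2 : ℕ) := by
  rw [deriv_eq hc hz, add_sub_cancel_left]
  refine tsum_of_norm_bounded hc.hasSum fun m => ?_
  rw [norm_mul, norm_mul, Complex.norm_natCast, norm_pow]
  exact mul_le_of_le_one_right (by positivity) (pow_le_one₀ (norm_nonneg z) hz.le)

theorem norm_deriv_sub_one_add_norm_mul_deriv_deriv_le
    (hc : Summable fun m => ‖c m‖ * (m + 2 : ℕ)) (hz : ‖z‖ < 1 / 2) :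
    ‖deriv (normalizedPowerSeries c) z - 1‖ + ‖z * deriv (deriv (normalizedPowerSeries c)) z‖ ≤
      ∑' m, ‖c m‖ * (m + 2 : ℕ) := by
  have hz1 : ‖z‖ < 1 := hz.trans (by norm_num)
  set a : ℕ → ℝ := fun m => ‖c m‖ * (m + 2 : ℕ) * ‖z‖ ^ (m + 1)
  set b : ℕ → ℝ := fun m => ‖c m‖ * (m + 2 : ℕ) * ((m + 1 : ℕ) * ‖z‖ ^ (m + 1))
  have hab : ∀ m, a m + b m ≤ ‖c m‖ * (m + 2 : ℕ) := fun m => by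
    have : ((m + 2 : ℕ) : ℝ) * ‖z‖ ^ (m + 1) ≤ 1 :=
      (mul_le_mul_of_nonneg_left (pow_le_pow_left₀ (norm_nonneg z) hz.le _) (by positivity)).trans
        (natCast_succ_mul_half_pow_le_one (m + 1))
    calc a m + b m = ‖c m‖ * (m + 2 : ℕ) * ((m + 2 : ℕ) * ‖z‖ ^ (m + 1)) := by
          simp only [a, b]; push_cast; ring
      _ ≤ ‖c m‖ * (m + 2 : ℕ) := mul_le_of_le_one_right (by positivity) this
  have ha : Summable a := hc.of_nonneg_of_le (fun m => by positivity)
    fun m => (le_add_of_nonneg_right (by positivity)).trans (hab m)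
  have hb : Summable b := hc.of_nonneg_of_le (fun m => by positivity)
    fun m => (le_add_of_nonneg_left (by positivity)).trans (hab m)
  have hU : ‖deriv (normalizedPowerSeries c) z - 1‖ ≤ ∑' m, a m := by
    rw [deriv_eq hc hz1, add_sub_cancel_left]
    refine tsum_of_norm_bounded ha.hasSum fun m => le_of_eq ?_
    rw [norm_mul, norm_mul, Complex.norm_natCast, norm_pow]
  have hV : ‖z * deriv (deriv (normalizedPowerSeries c)) z‖ ≤ ∑' m, b m := by
    rw [deriv_deriv_eq hc hz, ← tsum_mul_left]
    refine tsum_of_norm_bounded hb.hasSum fun m => le_of_eq ?_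
    simp only [b, norm_mul, Complex.norm_natCast, norm_pow]
    ring
  calc _ ≤ ∑' m, a m + ∑' m, b m := add_le_add hU hV
    _ = ∑' m, (a m + b m) := (ha.tsum_add hb).symm
    _ ≤ _ := ha.add hb |>.tsum_le_tsum hab hc

theorem convexity_criterion (hc : Summable fun m => ‖c m‖ * (m + 2 : ℕ))
    (hlt : ∑' m, ‖c m‖ * (m + 2 : ℕ) < 1) :
    (∀ z : ℂ, ‖z‖ < 1 → ‖deriv (normalizedPowerSeries c) z - 1‖ < 1) ∧
    (∀ z : ℂ, ‖z‖ < 1 / 2 → 0 < (1 + z * deriv (deriv (normalizedPowerSeries c)) z /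
      deriv (normalizedPowerSeries c) z).re) := by
  refine ⟨fun z hz => (norm_deriv_sub_one_le hc hz).trans_lt hlt, fun z hz => ?_⟩
  have key := (norm_deriv_sub_one_add_norm_mul_deriv_deriv_le hc hz).trans_lt hlt
  simpa only [add_sub_cancel] using Complex.re_one_add_div_pos key

end normalizedPowerSeries

theorem Real.mul_Gamma_le_Gamma {x y : ℝ} (hx : 2 ≤ x) (hxy : x + 1 ≤ y) :
    x * Real.Gamma x ≤ Real.Gamma y := by
  rw [← Real.Gamma_add_one (by positivity)]
  exact Real.Gamma_strictMonoOn_Ici.monotoneOn (Set.mem_Ici.mpr (by linarith))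
    (Set.mem_Ici.mpr (by linarith)) hxy

theorem Real.hasSum_inv_factorial_succ :
    HasSum (fun m : ℕ => ((m + 1)! : ℝ)⁻¹) (Real.exp 1 - 1) := by
  have h := NormedSpace.expSeries_div_hasSum_exp (1 : ℝ)
  rw [← Real.exp_eq_exp_ℝ] at h
  simpa using (hasSum_nat_add_iff' 1).mpr h

section LeRoy

variable {ι : Type*} [Fintype ι]

theorem prod_Gamma_rpow_pos {x e : ι → ℝ} (hx : ∀ i, 0 < x i) : 0 < ∏ i, Real.Gamma (x i) ^ e i :=
  Finset.prod_pos fun i _ => Real.rpow_pos_of_pos (Real.Gamma_pos_of_pos (hx i)) _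

variable (α β γ : ι → ℝ)

noncomputable def leRoyDenom (m : ℕ) : ℝ := ∏ i, Real.Gamma (α i * m + β i) ^ γ i

/-- `leRoyCoeff α β γ k` is the paper's `A_{k+2}`, the coefficient of `w ^ (k + 2)`. -/
noncomputable def leRoyCoeff (k : ℕ) : ℝ :=
  (∏ i, Real.Gamma (β i) ^ γ i) / leRoyDenom α β γ (k + 1)

variable {α β γ}

theorem leRoyDenom_one : leRoyDenom α β γ 1 = ∏ i, Real.Gamma (α i + β i) ^ γ i := by
  simp [leRoyDenom]

theorem leRoyCoeff_zero :
    leRoyCoeff α β γ 0 = (∏ i, Real.Gamma (β i) ^ γ i) / ∏ i, Real.Gamma (α i + β i) ^ γ i :=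
  congrArg _ leRoyDenom_one

theorem leRoyDenom_pos (hα : ∀ i, 0 ≤ α i) (hβ : ∀ i, 0 < β i) (m : ℕ) : 0 < leRoyDenom α β γ m :=
  prod_Gamma_rpow_pos fun i => add_pos_of_nonneg_of_pos (mul_nonneg (hα i) m.cast_nonneg) (hβ i)

theorem leRoyCoeff_pos (hα : ∀ i, 0 ≤ α i) (hβ : ∀ i, 0 < β i) (k : ℕ) : 0 < leRoyCoeff α β γ k :=
  div_pos (prod_Gamma_rpow_pos hβ) (leRoyDenom_pos hα hβ _)

theorem add_two_mul_leRoyDenom_le [Nonempty ι] (hα : ∀ i, 1 ≤ α i) (hβ : ∀ i, 2 ≤ β i)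
    (hγ : ∀ i, 1 ≤ γ i) (m : ℕ) :
    (m + 2 : ℝ) * leRoyDenom α β γ m ≤ leRoyDenom α β γ (m + 1) := by
  have hm : ∀ i, (m + 2 : ℝ) ≤ α i * m + β i := fun i => by
    nlinarith [hα i, hβ i, (m.cast_nonneg : (0 : ℝ) ≤ m)]
  have hΓ : ∀ i, 0 < Real.Gamma (α i * m + β i) := fun i =>
    Real.Gamma_pos_of_pos (by linarith [hm i])
  have hfactor : ∀ i, (m + 2 : ℝ) * Real.Gamma (α i * m + β i) ^ γ i ≤
      Real.Gamma (α i * (m + 1 : ℕ) + β i) ^ γ i := fun i => by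
    have hx : 0 ≤ α i * m + β i := by linarith [hm i]
    have := hΓ i
    calc (m + 2 : ℝ) * Real.Gamma (α i * m + β i) ^ γ i
        ≤ (α i * m + β i) ^ γ i * Real.Gamma (α i * m + β i) ^ γ i := by
          gcongr
          exact (hm i).trans (Real.self_le_rpow_of_one_le (by linarith [hm i]) (hγ i))
      _ = ((α i * m + β i) * Real.Gamma (α i * m + β i)) ^ γ i :=
          (Real.mul_rpow hx this.le).symm
      _ ≤ Real.Gamma (α i * (m + 1 : ℕ) + β i) ^ γ i := by
          gcongr
          · linarith [hγ i]
          · exact Real.mul_Gamma_le_Gamma (by linarith [hm i]) (by push_cast; linarith [hα i])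
  calc (m + 2 : ℝ) * leRoyDenom α β γ m ≤ (m + 2 : ℝ) ^ Fintype.card ι * leRoyDenom α β γ m := by
        gcongr
        · exact (leRoyDenom_pos (fun i => by linarith [hα i]) (fun i => by linarith [hβ i]) m).le
        · exact le_self_pow₀ (by linarith) Fintype.card_ne_zero
    _ = ∏ i, (m + 2 : ℝ) * Real.Gamma (α i * m + β i) ^ γ i := by
        rw [Finset.prod_mul_distrib, Finset.prod_const, Finset.card_univ, leRoyDenom]
    _ ≤ leRoyDenom α β γ (m + 1) :=
        Finset.prod_le_prod (fun i _ => by have := hΓ i; positivity) fun i _ => hfactor i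

theorem factorial_mul_leRoyDenom_one_le [Nonempty ι] (hα : ∀ i, 1 ≤ α i) (hβ : ∀ i, 2 ≤ β i)
    (hγ : ∀ i, 1 ≤ γ i) (m : ℕ) :
    ((m + 2)! : ℝ) * leRoyDenom α β γ 1 ≤ 2 * leRoyDenom α β γ (m + 1) := by
  induction m with
  | zero => norm_num
  | succ m ih =>
    calc ((m + 3)! : ℝ) * leRoyDenom α β γ 1
        = (m + 3 : ℝ) * (((m + 2)! : ℝ) * leRoyDenom α β γ 1) := by
          rw [Nat.factorial_succ]; push_cast; ring
      _ ≤ (m + 3 : ℝ) * (2 * leRoyDenom α β γ (m + 1)) := by gcongr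
      _ = 2 * ((m + 1 : ℕ) + 2 : ℝ) * leRoyDenom α β γ (m + 1) := by push_cast; ring
      _ ≤ 2 * leRoyDenom α β γ (m + 2) := by
          rw [mul_assoc]; gcongr; exact add_two_mul_leRoyDenom_le hα hβ hγ (m + 1)

theorem leRoyCoeff_mul_le [Nonempty ι] (hα : ∀ i, 1 ≤ α i) (hβ : ∀ i, 2 ≤ β i)
    (hγ : ∀ i, 1 ≤ γ i) (k : ℕ) :
    leRoyCoeff α β γ k * (k + 2 : ℕ) ≤ 2 * leRoyCoeff α β γ 0 * ((k + 1)! : ℝ)⁻¹ := by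
  have hQ := leRoyDenom_pos (γ := γ) (fun i => by linarith [hα i]) (fun i => by linarith [hβ i])
  have hQ₁ := hQ 1
  have hQₖ := hQ (k + 1)
  have hP : 0 < ∏ i, Real.Gamma (β i) ^ γ i := prod_Gamma_rpow_pos fun i => by linarith [hβ i]
  have hfac := factorial_mul_leRoyDenom_one_le hα hβ hγ k
  rw [Nat.factorial_succ] at hfac
  unfold leRoyCoeff
  field_simp
  push_cast at hfac ⊢
  linarith

end LeRoy

theorem multi_leroy_convex (n : ℕ) (hn : 1 ≤ n)
    (α β γ : Fin n → ℝ)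
    (hα : ∀ i, 1 ≤ α i) (hγ : ∀ i, 1 ≤ γ i) (hβ : ∀ i, 2 ≤ β i)
    (hcond : 2 * (Real.exp 1 - 1) * ∏ i, (Real.Gamma (β i)) ^ γ i <
      ∏ i, (Real.Gamma (α i + β i)) ^ γ i) :
    (∀ z : ℂ, ‖z‖ < 1 →
      ‖deriv (fun w : ℂ => w + ∑' k : ℕ,
          ((∏ i, (Real.Gamma (β i)) ^ γ i) /
            (∏ i, (Real.Gamma (α i * (k + 1 : ℕ) + β i)) ^ γ i) : ℝ) * w ^ (k + 2)) z
        - 1‖ < 1) ∧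
    (∀ z : ℂ, ‖z‖ < 1 / 2 →
      0 < (1 + z *
          deriv (deriv (fun w : ℂ => w + ∑' k : ℕ,
            ((∏ i, (Real.Gamma (β i)) ^ γ i) /
              (∏ i, (Real.Gamma (α i * (k + 1 : ℕ) + β i)) ^ γ i) : ℝ) * w ^ (k + 2))) z /
          deriv (fun w : ℂ => w + ∑' k : ℕ,
            ((∏ i, (Real.Gamma (β i)) ^ γ i) /
              (∏ i, (Real.Gamma (α i * (k + 1 : ℕ) + β i)) ^ γ i) : ℝ) * w ^ (k + 2)) z).re)
    := by
  have : Nonempty (Fin n) := ⟨⟨0, hn⟩⟩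
  have hα₀ : ∀ i, 0 ≤ α i := fun i => by linarith [hα i]
  have hβ₀ : ∀ i, 0 < β i := fun i => by linarith [hβ i]
  have hQ₁ : 0 < ∏ i, Real.Gamma (α i + β i) ^ γ i := by
    rw [← leRoyDenom_one]; exact leRoyDenom_pos hα₀ hβ₀ 1
  have hy₁ : 2 * leRoyCoeff α β γ 0 * (Real.exp 1 - 1) < 1 := calc
    _ = 2 * (Real.exp 1 - 1) * (∏ i, Real.Gamma (β i) ^ γ i) /
        ∏ i, Real.Gamma (α i + β i) ^ γ i := by rw [leRoyCoeff_zero]; ring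
    _ < 1 := (div_lt_one hQ₁).mpr hcond
  have hcoeff : ∀ k, ‖(leRoyCoeff α β γ k : ℂ)‖ * (k + 2 : ℕ) ≤
      2 * leRoyCoeff α β γ 0 * ((k + 1)! : ℝ)⁻¹ := fun k => by
    rw [Complex.norm_real, Real.norm_of_nonneg (leRoyCoeff_pos hα₀ hβ₀ k).le]
    exact leRoyCoeff_mul_le hα hβ hγ k
  have hfac := Real.hasSum_inv_factorial_succ.mul_left (2 * leRoyCoeff α β γ 0)
  have hsum := hfac.summable.of_nonneg_of_le (fun _ => by positivity) hcoeff
  exact normalizedPowerSeries.convexity_criterion hsum <|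
    (hsum.tsum_le_tsum hcoeff hfac.summable).trans_lt (hfac.tsum_eq ▸ hy₁)
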